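/- Let d, p, N ≥ 1 be integers, 1 ≤ p' ≤ p, T > p, let A⋆ ∈ ℝ^{d×pd} and set L_⋆ := (I_{Td} − M_{A⋆})^{-1}. Let A₁, A₂ ∈ ℝ^{d×pd} each have zero blocks beyond position p', let A⋆_{p'} = (A⋆_1, …, A⋆_{p'}, 0, …, 0), and write Δ_{A_i} := M_{A_i} − M_{A⋆_{p'}}. Then for every matrix E ∈ ℝ^{Td×N}: Tr(Eᵀ Δ_{A₂} L_⋆ E) ≤ Tr(Eᵀ Δ_{A₁} L_⋆ E) + √p' · ‖A₁ − A₂‖_op ‖L_⋆‖_op ‖E‖_F². -/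

import Mathlib

open scoped BigOperators
open Matrix MeasureTheory

namespace LongContext

/-- The ℓ²→ℓ² operator norm (largest singular value) of a real matrix. -/
noncomputable def opNorm {m n : Type*} [Fintype m] [Fintype n] [DecidableEq n]
    (M : Matrix m n ℝ) : ℝ :=
  ‖LinearMap.toContinuousLinearMap (Matrix.toEuclideanLin M)‖

/-- The squared Frobenius norm of a real matrix. -/
noncomputable def frobSq {m n : Type*} [Fintype m] [Fintype n] (M : Matrix m n ℝ) : ℝ :=
  ∑ i, ∑ j, (M i j) ^ 2

/-- The Frobenius norm of a real matrix. -/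
noncomputable def frobNorm {m n : Type*} [Fintype m] [Fintype n] (M : Matrix m n ℝ) : ℝ :=
  Real.sqrt (frobSq M)

/-- The smallest singular value of a square real matrix, characterized as the
infimum of `‖M x‖` over unit vectors `x`. -/
noncomputable def sigmaMin {n : Type*} [Fintype n] [DecidableEq n] (M : Matrix n n ℝ) : ℝ :=
  sInf {r : ℝ | ∃ x : EuclideanSpace ℝ n, ‖x‖ = 1 ∧ r = ‖Matrix.toEuclideanLin M x‖}

/-- A design matrix `A = (A_1, …, A_p)` viewed as a single `d × (p·d)` matrix. -/
def blockRow {d p : ℕ} (A : Fin p → Matrix (Fin d) (Fin d) ℝ) :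
    Matrix (Fin d) (Fin p × Fin d) ℝ :=
  fun i kj => A kj.1 i kj.2

/-- The `Td × Td` block matrix `M_A` with `d × d` blocks `(M_A)^{(i,j)} = A_{i-j}`
for `1 ≤ i - j ≤ p` (with `i, j` the 1-indexed block indices) and `0` otherwise. -/
def MA {d p : ℕ} (T : ℕ) (A : Fin p → Matrix (Fin d) (Fin d) ℝ) :
    Matrix (Fin T × Fin d) (Fin T × Fin d) ℝ :=
  fun ia jb =>
    if h : jb.1.1 < ia.1.1 ∧ ia.1.1 - jb.1.1 ≤ p then
      A ⟨ia.1.1 - jb.1.1 - 1, by omega⟩ ia.2 jb.2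
    else 0

/-- Truncation of a design matrix to context length `p'`:
`A⋆_{p'} = (A_1, …, A_{p'}, 0, …, 0)`. -/
def trunc {d p : ℕ} (p' : ℕ) (A : Fin p → Matrix (Fin d) (Fin d) ℝ) :
    Fin p → Matrix (Fin d) (Fin d) ℝ :=
  fun k => if k.1 < p' then A k else 0

/-- The `(i,j)` block (1-indexed, here 0-indexed by `Fin T`) of size `d × d`
of a `Td × Td` matrix. -/
def Mblock {d T : ℕ} (L : Matrix (Fin T × Fin d) (Fin T × Fin d) ℝ)
    (i j : Fin T) : Matrix (Fin d) (Fin d) ℝ :=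
  fun a b => L (i, a) (j, b)

/-- The autoregressive trajectory `x_t = ∑_{k=1}^p A_k x_{t-k} + ξ_t` for `t ≥ 1`,
with `x_s = 0` for `s ≤ 0`. -/
noncomputable def traj {d p : ℕ} (A : Fin p → Matrix (Fin d) (Fin d) ℝ)
    (xi : ℕ → Fin d → ℝ) : ℕ → Fin d → ℝ
  | 0 => 0
  | (t + 1) => (∑ k : Fin p, (A k).mulVec (traj A xi (t - k.1))) + xi (t + 1)
  termination_by t => t
  decreasing_by exact Nat.lt_succ_of_le (Nat.sub_le _ _)

/-- The empirical square loss
`L(A) = (1/(NT)) ∑_{n=1}^N ∑_{t=p}^T ‖x_t^{(n)} − ∑_{k=1}^p A_k x_{t−k}^{(n)}‖²`. -/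
noncomputable def empLoss {d p : ℕ} (N T : ℕ) (x : Fin N → ℕ → Fin d → ℝ)
    (A : Fin p → Matrix (Fin d) (Fin d) ℝ) : ℝ :=
  (1 / (N * T : ℝ)) * ∑ n : Fin N, ∑ t ∈ Finset.Icc p T,
    ∑ i : Fin d, (x n t i - ∑ k : Fin p, (A k).mulVec (x n (t - (k.1 + 1))) i) ^ 2

/-! ### Auxiliary lemmas -/

lemma esq_aux {n : Type*} [Fintype n] (v : n → ℝ) :
    ‖(WithLp.equiv 2 (n → ℝ)).symm v‖ ^ 2 = ∑ i, v i ^ 2 := by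
  rw [EuclideanSpace.norm_eq, Real.sq_sqrt (by positivity)]
  simp [Real.norm_eq_abs, sq_abs]

lemma mulVec_sq_le {m n : Type*} [Fintype m] [Fintype n] [DecidableEq n]
    (M : Matrix m n ℝ) (x : n → ℝ) :
    ∑ i, ((M *ᵥ x) i) ^ 2 ≤ opNorm M ^ 2 * ∑ j, (x j) ^ 2 := by
  have key : ‖(WithLp.equiv 2 (m → ℝ)).symm (M *ᵥ x)‖ ≤
      opNorm M * ‖(WithLp.equiv 2 (n → ℝ)).symm x‖ := by
    rw [WithLp.equiv_symm_apply, WithLp.equiv_symm_apply, ← Matrix.toEuclideanLin_apply_piLp_toLp]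
    have := (LinearMap.toContinuousLinearMap (Matrix.toEuclideanLin M)).le_opNorm
      ((WithLp.equiv 2 (n → ℝ)).symm x)
    simpa [opNorm] using this
  have h2 := mul_self_le_mul_self (norm_nonneg _) key
  rw [← pow_two, ← pow_two, mul_pow] at h2
  rw [esq_aux, esq_aux] at h2
  exact h2

lemma opNorm_nonneg {m n : Type*} [Fintype m] [Fintype n] [DecidableEq n]
    (M : Matrix m n ℝ) : 0 ≤ opNorm M := norm_nonneg _

lemma opNorm_neg {m n : Type*} [Fintype m] [Fintype n] [DecidableEq n]
    (M : Matrix m n ℝ) : opNorm (-M) = opNorm M := by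
  unfold opNorm
  rw [map_neg, map_neg, norm_neg]

lemma entry_claim {d p p' T : ℕ} (hp'p : p' ≤ p) (hp'1 : 1 ≤ p')
    (D : Fin p → Matrix (Fin d) (Fin d) ℝ)
    (hD : ∀ k : Fin p, p' ≤ k.1 → D k = 0)
    (x : Fin T × Fin d → ℝ) (i : Fin T) (a : Fin d) :
    ((MA T D) *ᵥ x) (i, a) =
      ((blockRow D) *ᵥ (fun kb : Fin p × Fin d =>
        if h : kb.1.1 + 1 ≤ i.1 ∧ kb.1.1 < p' then
          x (⟨i.1 - kb.1.1 - 1, by omega⟩, kb.2) else 0)) a := by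
  classical
  have hp : 0 < p := lt_of_lt_of_le hp'1 hp'p
  set Dn : ℕ → Matrix (Fin d) (Fin d) ℝ := fun k => if h : k < p then D ⟨k, h⟩ else 0 with hDn
  set y : ℕ → Fin d → ℝ := fun j b => if h : j < T then x (⟨j, h⟩, b) else 0 with hy
  have hDn0 : ∀ k, p' ≤ k → Dn k = 0 := by
    intro k hk
    by_cases h : k < p
    · simp only [hDn, dif_pos h]; exact hD ⟨k, h⟩ hk
    · simp [hDn, h]
  have hL : ((MA T D) *ᵥ x) (i, a) =
      ∑ j : Fin T, (if j.1 < i.1 ∧ i.1 - j.1 - 1 < p' then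
        ∑ b : Fin d, Dn (i.1 - j.1 - 1) a b * y j.1 b else 0) := by
    rw [Matrix.mulVec, dotProduct, Fintype.sum_prod_type]
    refine Finset.sum_congr rfl fun j _ => ?_
    by_cases h1 : j.1 < i.1 ∧ i.1 - j.1 ≤ p
    · by_cases h2 : i.1 - j.1 - 1 < p'
      · rw [if_pos ⟨h1.1, h2⟩]
        refine Finset.sum_congr rfl fun b _ => ?_
        simp only [MA]
        rw [dif_pos h1]
        have e1 : Dn (i.1 - j.1 - 1) = D ⟨i.1 - j.1 - 1, by omega⟩ := by
          simp only [hDn]; rw [dif_pos]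
        have e2 : y j.1 b = x (j, b) := by
          simp only [hy]; rw [dif_pos j.2]
        rw [e1, e2]
      · rw [if_neg (by tauto)]
        have : D (⟨i.1 - j.1 - 1, by omega⟩ : Fin p) = 0 := hD _ (by simpa using not_lt.mp h2)
        simp [MA, dif_pos h1, this]
    · rw [if_neg (by omega)]
      refine Finset.sum_eq_zero fun b _ => ?_
      simp only [MA]
      rw [dif_neg h1, zero_mul]
  have hR : ((blockRow D) *ᵥ (fun kb : Fin p × Fin d =>
        if h : kb.1.1 + 1 ≤ i.1 ∧ kb.1.1 < p' then
          x (⟨i.1 - kb.1.1 - 1, by omega⟩, kb.2) else 0)) a =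
      ∑ k : Fin p, (if k.1 + 1 ≤ i.1 ∧ k.1 < p' then
        ∑ b : Fin d, Dn k.1 a b * y (i.1 - k.1 - 1) b else 0) := by
    rw [Matrix.mulVec, dotProduct, Fintype.sum_prod_type]
    refine Finset.sum_congr rfl fun k _ => ?_
    by_cases h1 : k.1 + 1 ≤ i.1 ∧ k.1 < p'
    · rw [if_pos h1]
      refine Finset.sum_congr rfl fun b _ => ?_
      rw [blockRow]
      have e1 : Dn k.1 = D k := by simp only [hDn]; rw [dif_pos k.2]
      have hi : i.1 < T := i.2
      have e2 : y (i.1 - k.1 - 1) b = x (⟨i.1 - k.1 - 1, by omega⟩, b) := by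
        simp only [hy]; rw [dif_pos (by omega : i.1 - k.1 - 1 < T)]
      rw [e1, e2, dif_pos h1]
    · rw [if_neg h1]
      simp only [dif_neg h1, mul_zero]
      exact Finset.sum_const_zero
  have hT0 : 0 < T := i.pos
  rw [hL, hR]
  rw [← Finset.sum_filter, ← Finset.sum_filter]
  refine Finset.sum_nbij' (i := fun j => (⟨(i.1 - j.1 - 1) % p, Nat.mod_lt _ hp⟩ : Fin p))
    (j := fun k => (⟨(i.1 - k.1 - 1) % T, Nat.mod_lt _ hT0⟩ : Fin T))
    ?_ ?_ ?_ ?_ ?_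
  · intro j hj
    simp only [Finset.mem_filter, Finset.mem_univ, true_and] at hj ⊢
    have : i.1 - j.1 - 1 < p := by omega
    rw [Nat.mod_eq_of_lt this]
    omega
  · intro k hk
    simp only [Finset.mem_filter, Finset.mem_univ, true_and] at hk ⊢
    have hi : i.1 < T := i.2
    have : i.1 - k.1 - 1 < T := by omega
    rw [Nat.mod_eq_of_lt this]
    omega
  · intro j hj
    simp only [Finset.mem_filter, Finset.mem_univ, true_and] at hj
    have h1 : i.1 - j.1 - 1 < p := by omega
    have hi : i.1 < T := i.2
    ext
    simp only
    rw [Nat.mod_eq_of_lt h1, Nat.mod_eq_of_lt (by omega)]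
    omega
  · intro k hk
    simp only [Finset.mem_filter, Finset.mem_univ, true_and] at hk
    have hi : i.1 < T := i.2
    have h1 : i.1 - k.1 - 1 < T := by omega
    ext
    simp only
    rw [Nat.mod_eq_of_lt h1, Nat.mod_eq_of_lt (by omega)]
    omega
  · intro j hj
    simp only [Finset.mem_filter, Finset.mem_univ, true_and] at hj
    have h1 : i.1 - j.1 - 1 < p := by omega
    simp only [Nat.mod_eq_of_lt h1]
    refine Finset.sum_congr rfl fun b _ => ?_
    congr 1
    congr 1
    omega

lemma zsum_le {d p p' T : ℕ} (hp'p : p' ≤ p)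
    (x : Fin T × Fin d → ℝ) :
    ∑ i : Fin T, ∑ kb : Fin p × Fin d,
      (if h : kb.1.1 + 1 ≤ i.1 ∧ kb.1.1 < p' then
        x (⟨i.1 - kb.1.1 - 1, by omega⟩, kb.2) else 0) ^ 2
      ≤ (p' : ℝ) * ∑ v : Fin T × Fin d, x v ^ 2 := by
  classical
  set y : ℕ → Fin d → ℝ := fun j b => if h : j < T then x (⟨j, h⟩, b) else 0 with hy
  set S : ℝ := ∑ v : Fin T × Fin d, x v ^ 2 with hS
  have hSnn : ∀ j : Fin T, 0 ≤ ∑ b : Fin d, (y j.1 b) ^ 2 := fun j => by positivity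
  have hGS : ∑ j : Fin T, ∑ b : Fin d, (y j.1 b) ^ 2 = S := by
    rw [hS, Fintype.sum_prod_type]
    refine Finset.sum_congr rfl fun j _ => Finset.sum_congr rfl fun b _ => ?_
    simp only [hy]; rw [dif_pos j.2]
  have hrw : ∀ (i : Fin T) (kb : Fin p × Fin d),
      (if h : kb.1.1 + 1 ≤ i.1 ∧ kb.1.1 < p' then
        x (⟨i.1 - kb.1.1 - 1, by omega⟩, kb.2) else 0) ^ 2
      = if kb.1.1 + 1 ≤ i.1 ∧ kb.1.1 < p' then (y (i.1 - kb.1.1 - 1) kb.2) ^ 2 else 0 := by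
    intro i kb
    by_cases h : kb.1.1 + 1 ≤ i.1 ∧ kb.1.1 < p'
    · rw [dif_pos h, if_pos h]
      have hi : i.1 < T := i.2
      congr 1
      simp only [hy]
      rw [dif_pos (by omega : i.1 - kb.1.1 - 1 < T)]
    · rw [dif_neg h, if_neg h]; ring
  calc ∑ i : Fin T, ∑ kb : Fin p × Fin d,
      (if h : kb.1.1 + 1 ≤ i.1 ∧ kb.1.1 < p' then
        x (⟨i.1 - kb.1.1 - 1, by omega⟩, kb.2) else 0) ^ 2
      = ∑ k : Fin p, ∑ i : Fin T,
        (if k.1 + 1 ≤ i.1 ∧ k.1 < p' then ∑ b : Fin d, (y (i.1 - k.1 - 1) b) ^ 2 else 0) := by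
        have step : ∀ i : Fin T, (∑ kb : Fin p × Fin d,
            (if h : kb.1.1 + 1 ≤ i.1 ∧ kb.1.1 < p' then
              x (⟨i.1 - kb.1.1 - 1, by omega⟩, kb.2) else 0) ^ 2)
            = ∑ k : Fin p, (if k.1 + 1 ≤ i.1 ∧ k.1 < p' then
                ∑ b : Fin d, (y (i.1 - k.1 - 1) b) ^ 2 else 0) := by
          intro i
          rw [Fintype.sum_prod_type]
          refine Finset.sum_congr rfl fun k _ => ?_
          rw [Finset.sum_congr rfl fun b _ => hrw i (k, b)]
          by_cases h : k.1 + 1 ≤ i.1 ∧ k.1 < p' <;> simp [h]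
        rw [Finset.sum_congr rfl fun i _ => step i, Finset.sum_comm]
    _ ≤ ∑ k : Fin p, (if k.1 < p' then S else 0) := by
        refine Finset.sum_le_sum fun k _ => ?_
        by_cases hk : k.1 < p'
        · rw [if_pos hk]
          have : ∀ i : Fin T, (if k.1 + 1 ≤ i.1 ∧ k.1 < p' then
              ∑ b : Fin d, (y (i.1 - k.1 - 1) b) ^ 2 else 0)
              = if k.1 + 1 ≤ i.1 then ∑ b : Fin d, (y (i.1 - k.1 - 1) b) ^ 2 else 0 := by
            intro i; by_cases h : k.1 + 1 ≤ i.1 <;> simp [h, hk]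
          rw [Finset.sum_congr rfl fun i _ => this i, ← Finset.sum_filter]
          set f : Fin T → Fin T := fun i => ⟨(i.1 - k.1 - 1) % T, Nat.mod_lt _ i.pos⟩ with hf
          set s := Finset.filter (fun i : Fin T => k.1 + 1 ≤ i.1) Finset.univ with hs
          have hmem : ∀ i ∈ s, (f i).1 = i.1 - k.1 - 1 := by
            intro i hi
            simp only [hs, Finset.mem_filter, Finset.mem_univ, true_and] at hi
            have : i.1 - k.1 - 1 < T := by have := i.2; omega
            simp only [hf, Nat.mod_eq_of_lt this]
          have hinj : ∀ i1 ∈ s, ∀ i2 ∈ s, f i1 = f i2 → i1 = i2 := by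
            intro i1 h1 i2 h2 hfe
            have e1 := hmem i1 h1
            have e2 := hmem i2 h2
            simp only [hs, Finset.mem_filter, Finset.mem_univ, true_and] at h1 h2
            have : (f i1).1 = (f i2).1 := by rw [hfe]
            rw [e1, e2] at this
            exact Fin.ext (by omega)
          have hcg : ∑ i ∈ s, ∑ b : Fin d, (y (i.1 - k.1 - 1) b) ^ 2
              = ∑ i ∈ s, ∑ b : Fin d, (y ((f i).1) b) ^ 2 := by
            refine Finset.sum_congr rfl fun i hi => ?_
            rw [hmem i hi]
          have himg := Finset.sum_image (s := s) (g := f)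
            (f := fun j : Fin T => ∑ b : Fin d, (y j.1 b) ^ 2) hinj
          rw [hcg, ← himg]
          calc ∑ j ∈ s.image f, ∑ b : Fin d, (y j.1 b) ^ 2
              ≤ ∑ j : Fin T, ∑ b : Fin d, (y j.1 b) ^ 2 :=
                Finset.sum_le_sum_of_subset_of_nonneg (Finset.subset_univ _)
                  (fun j _ _ => hSnn j)
            _ = S := hGS
        · simp only [hk, and_false, if_false, Finset.sum_const_zero, if_neg hk, le_refl]
    _ = (p' : ℝ) * S := by
        rw [← Finset.sum_filter, Finset.sum_const]
        have hcard : (Finset.filter (fun k : Fin p => k.1 < p') Finset.univ).card = p' := by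
          have : Finset.filter (fun k : Fin p => k.1 < p') Finset.univ
              = Finset.map (Fin.castLEEmb hp'p) Finset.univ := by
            ext k
            simp only [Finset.mem_filter, Finset.mem_univ, true_and, Finset.mem_map,
              Fin.castLEEmb_apply]
            constructor
            · intro h; exact ⟨⟨k.1, h⟩, rfl⟩
            · rintro ⟨a, rfl⟩; exact a.2
          rw [this, Finset.card_map, Finset.card_univ, Fintype.card_fin]
        rw [hcard, nsmul_eq_mul]

lemma key_bound {d p p' T : ℕ} (hp'p : p' ≤ p) (hp'1 : 1 ≤ p')
    (D : Fin p → Matrix (Fin d) (Fin d) ℝ)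
    (hD : ∀ k : Fin p, p' ≤ k.1 → D k = 0)
    (x : Fin T × Fin d → ℝ) :
    ∑ v : Fin T × Fin d, (((MA T D) *ᵥ x) v) ^ 2
      ≤ (p' : ℝ) * opNorm (blockRow D) ^ 2 * ∑ v : Fin T × Fin d, x v ^ 2 := by
  classical
  calc ∑ v : Fin T × Fin d, (((MA T D) *ᵥ x) v) ^ 2
      = ∑ i : Fin T, ∑ a : Fin d, (((MA T D) *ᵥ x) (i, a)) ^ 2 := Fintype.sum_prod_type _
    _ = ∑ i : Fin T, ∑ a : Fin d, (((blockRow D) *ᵥ (fun kb : Fin p × Fin d =>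
          if h : kb.1.1 + 1 ≤ i.1 ∧ kb.1.1 < p' then
            x (⟨i.1 - kb.1.1 - 1, by omega⟩, kb.2) else 0)) a) ^ 2 := by
        refine Finset.sum_congr rfl fun i _ => Finset.sum_congr rfl fun a _ => ?_
        rw [entry_claim hp'p hp'1 D hD x i a]
    _ ≤ ∑ i : Fin T, opNorm (blockRow D) ^ 2 * ∑ kb : Fin p × Fin d,
          (if h : kb.1.1 + 1 ≤ i.1 ∧ kb.1.1 < p' then
            x (⟨i.1 - kb.1.1 - 1, by omega⟩, kb.2) else 0) ^ 2 := by
        refine Finset.sum_le_sum fun i _ => ?_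
        exact mulVec_sq_le (blockRow D) _
    _ = opNorm (blockRow D) ^ 2 * ∑ i : Fin T, ∑ kb : Fin p × Fin d,
          (if h : kb.1.1 + 1 ≤ i.1 ∧ kb.1.1 < p' then
            x (⟨i.1 - kb.1.1 - 1, by omega⟩, kb.2) else 0) ^ 2 := by
        rw [Finset.mul_sum]
    _ ≤ opNorm (blockRow D) ^ 2 * ((p' : ℝ) * ∑ v : Fin T × Fin d, x v ^ 2) := by
        refine mul_le_mul_of_nonneg_left (zsum_le hp'p x) ?_
        positivity
    _ = (p' : ℝ) * opNorm (blockRow D) ^ 2 * ∑ v : Fin T × Fin d, x v ^ 2 := by ring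

/-- Lemma 16 (discretization, upper bound). For `A₁, A₂` supported on the
first `p'` blocks and `Δ_{A_i} = M_{A_i} − M_{A⋆_{p'}}`:
`Tr(Eᵀ Δ_{A₂} L⋆ E) ≤ Tr(Eᵀ Δ_{A₁} L⋆ E) + √p'·‖A₁−A₂‖_op·‖L⋆‖_op·‖E‖_F²`. -/
theorem discretization_upper (d p p' N T : ℕ) (hd : 1 ≤ d) (hp : 1 ≤ p)
    (hN : 1 ≤ N) (hp'1 : 1 ≤ p') (hp'p : p' ≤ p) (hT : p < T)
    (Astar : Fin p → Matrix (Fin d) (Fin d) ℝ)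
    (A₁ A₂ : Fin p → Matrix (Fin d) (Fin d) ℝ)
    (hA₁ : ∀ k : Fin p, p' ≤ k.1 → A₁ k = 0)
    (hA₂ : ∀ k : Fin p, p' ≤ k.1 → A₂ k = 0)
    (E : Matrix (Fin T × Fin d) (Fin N) ℝ) :
    (Eᵀ * ((MA T A₂ - MA T (trunc p' Astar)) * ((1 - MA T Astar)⁻¹ * E))).trace ≤
      (Eᵀ * ((MA T A₁ - MA T (trunc p' Astar)) * ((1 - MA T Astar)⁻¹ * E))).trace +
        Real.sqrt p' * opNorm (blockRow A₁ - blockRow A₂) *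
          opNorm ((1 - MA T Astar)⁻¹) * frobSq E := by
  classical
  set L : Matrix (Fin T × Fin d) (Fin T × Fin d) ℝ := (1 - MA T Astar)⁻¹ with hLdef
  set D : Fin p → Matrix (Fin d) (Fin d) ℝ := fun k => A₂ k - A₁ k with hDdef
  have hD : ∀ k : Fin p, p' ≤ k.1 → D k = 0 := by
    intro k hk
    simp only [hDdef, hA₁ k hk, hA₂ k hk, sub_zero]
  have hMA : MA T A₂ - MA T A₁ = MA T D := by
    ext v w
    simp only [Matrix.sub_apply, MA]
    by_cases h : w.1.1 < v.1.1 ∧ v.1.1 - w.1.1 ≤ p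
    · rw [dif_pos h, dif_pos h, dif_pos h]
      simp [hDdef]
    · rw [dif_neg h, dif_neg h, dif_neg h, sub_zero]
  have hBR : blockRow A₁ - blockRow A₂ = -(blockRow D) := by
    ext a kb
    simp [blockRow, hDdef]
  -- the trace difference
  have hdiff : (Eᵀ * ((MA T A₂ - MA T (trunc p' Astar)) * (L * E))).trace -
      (Eᵀ * ((MA T A₁ - MA T (trunc p' Astar)) * (L * E))).trace =
      (Eᵀ * (MA T D * (L * E))).trace := by
    rw [← Matrix.trace_sub, ← Matrix.mul_sub, ← Matrix.sub_mul,
      sub_sub_sub_cancel_right, hMA]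
  -- main trace bound
  set W : Matrix (Fin T × Fin d) (Fin N) ℝ := MA T D * (L * E) with hW
  set β : ℝ := opNorm (blockRow D) with hβ
  set lam : ℝ := opNorm L with hlam
  have hβnn : 0 ≤ β := opNorm_nonneg _
  have hlamnn : 0 ≤ lam := opNorm_nonneg _
  have hp'nn : (0 : ℝ) ≤ (p' : ℝ) := Nat.cast_nonneg _
  set K : ℝ := Real.sqrt p' * β * lam with hK
  have hKnn : 0 ≤ K := by positivity
  have htr : (Eᵀ * W).trace = ∑ n : Fin N, ∑ v : Fin T × Fin d, E v n * W v n := by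
    simp [Matrix.trace, Matrix.diag, Matrix.mul_apply, Matrix.transpose_apply]
  have hfrob : frobSq E = ∑ n : Fin N, ∑ v : Fin T × Fin d, (E v n) ^ 2 := by
    rw [frobSq, Finset.sum_comm]
  have hcol : ∀ n : Fin N, ∀ v : Fin T × Fin d,
      W v n = ((MA T D) *ᵥ (L *ᵥ (fun u => E u n))) v := by
    intro n v
    simp only [hW, Matrix.mul_apply, Matrix.mulVec, dotProduct]
  have hperN : ∀ n : Fin N, ∑ v : Fin T × Fin d, E v n * W v n
      ≤ K * ∑ v : Fin T × Fin d, (E v n) ^ 2 := by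
    intro n
    set e : Fin T × Fin d → ℝ := fun v => E v n with he
    set a : ℝ := ∑ v : Fin T × Fin d, (e v) ^ 2 with ha
    have hann : 0 ≤ a := by positivity
    have hCS : ∑ v : Fin T × Fin d, E v n * W v n
        ≤ Real.sqrt a * Real.sqrt (∑ v : Fin T × Fin d, (W v n) ^ 2) :=
      Real.sum_mul_le_sqrt_mul_sqrt _ _ _
    have hWsq : ∑ v : Fin T × Fin d, (W v n) ^ 2 ≤ K ^ 2 * a := by
      have h1 : ∑ v : Fin T × Fin d, (W v n) ^ 2
          = ∑ v : Fin T × Fin d, (((MA T D) *ᵥ (L *ᵥ e)) v) ^ 2 := by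
        refine Finset.sum_congr rfl fun v _ => ?_
        rw [hcol n v]
      have h2 := key_bound hp'p hp'1 D hD (L *ᵥ e)
      have h3 : ∑ v : Fin T × Fin d, ((L *ᵥ e) v) ^ 2 ≤ lam ^ 2 * a :=
        mulVec_sq_le L e
      calc ∑ v : Fin T × Fin d, (W v n) ^ 2
          = ∑ v : Fin T × Fin d, (((MA T D) *ᵥ (L *ᵥ e)) v) ^ 2 := h1
        _ ≤ (p' : ℝ) * β ^ 2 * ∑ v : Fin T × Fin d, ((L *ᵥ e) v) ^ 2 := h2
        _ ≤ (p' : ℝ) * β ^ 2 * (lam ^ 2 * a) := by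
            refine mul_le_mul_of_nonneg_left h3 (by positivity)
        _ = K ^ 2 * a := by
            rw [hK]
            rw [mul_pow, mul_pow, Real.sq_sqrt hp'nn]
            ring
    calc ∑ v : Fin T × Fin d, E v n * W v n
        ≤ Real.sqrt a * Real.sqrt (∑ v : Fin T × Fin d, (W v n) ^ 2) := hCS
      _ ≤ Real.sqrt a * Real.sqrt (K ^ 2 * a) := by
          refine mul_le_mul_of_nonneg_left (Real.sqrt_le_sqrt hWsq) (Real.sqrt_nonneg _)
      _ = K * a := by
          rw [Real.sqrt_mul (by positivity : (0:ℝ) ≤ K ^ 2) a, Real.sqrt_sq hKnn,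
            ← mul_assoc, mul_comm (Real.sqrt a) K, mul_assoc, Real.mul_self_sqrt hann]
  have hmain : (Eᵀ * W).trace ≤ K * frobSq E := by
    rw [htr, hfrob, Finset.mul_sum]
    exact Finset.sum_le_sum fun n _ => hperN n
  have hopeq : opNorm (blockRow A₁ - blockRow A₂) = β := by
    rw [hBR, hβ, opNorm_neg]
  have := hdiff
  rw [hopeq]
  have : (Eᵀ * (MA T D * (L * E))).trace ≤ K * frobSq E := by
    rw [← hW]; exact hmain
  rw [← hdiff] at this
  rw [hK] at this
  linarith

end LongContext
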